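/- arXiv:math/9803093 — 2 statements merged into one kernel-verified Lean document; each statement's English description precedes it below -/
import Mathlib

section
/- Let β and y be real numbers with β ≥ 1 and y ≥ 0. Suppose that y ≥ 4 − 3·√β, and that equality y = 4 − 3·√β can hold only if β = 1. Then 2·y² + β > 32/19. -/
/-!
With `s = √β`, on the line `y = 4 - 3s` one has `2y² + s² = 19 (s - 24/19)² + 32/19`, so
`32/19` is attained only at `s = 24/19`, which the equality case `β = 1` excludes; strictly
above the line `2y² + β` is larger still.
-/

lemma two_mul_sq_add_sq_eq (s : ℝ) :
    2 * (4 - 3 * s) ^ 2 + s ^ 2 = 19 * (s - 24 / 19) ^ 2 + 32 / 19 := by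
  ring

lemma lt_two_mul_sq_add_sq_of_ne {s : ℝ} (hs : s ≠ 24 / 19) :
    32 / 19 < 2 * (4 - 3 * s) ^ 2 + s ^ 2 := by
  have : 0 < (s - 24 / 19) ^ 2 := sq_pos_of_ne_zero (sub_ne_zero.mpr hs)
  rw [two_mul_sq_add_sq_eq]
  linarith

lemma lt_two_mul_sq_add_sq_of_lt {s y : ℝ} (h : 4 - 3 * s < y) :
    32 / 19 < 2 * y ^ 2 + s ^ 2 := by
  rcases le_or_gt (4 - 3 * s) 0 with hneg | hpos
  · nlinarith
  · have hsq : (4 - 3 * s) ^ 2 < y ^ 2 := pow_lt_pow_left₀ h hpos.le two_ne_zero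
    nlinarith [two_mul_sq_add_sq_eq s, sq_nonneg (s - 24 / 19)]

theorem stmt0_general (β y : ℝ) (hβ : 1 ≤ β)
    (hineq : y ≥ 4 - 3 * Real.sqrt β)
    (heq : y = 4 - 3 * Real.sqrt β → β = 1) :
    2 * y ^ 2 + β > 32 / 19 := by
  have hβ_sq : Real.sqrt β ^ 2 = β := Real.sq_sqrt (by linarith)
  rw [gt_iff_lt, ← hβ_sq]
  rcases hineq.lt_or_eq with hlt | rfl
  · exact lt_two_mul_sq_add_sq_of_lt hlt
  · have hs : Real.sqrt β = 1 := by rw [heq rfl, Real.sqrt_one]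
    exact lt_two_mul_sq_add_sq_of_ne (by rw [hs]; norm_num)

/-- Algebraic core of Theorem I: if `β ≥ 1`, `y ≥ 0`, `y ≥ 4 - 3√β`, and equality
`y = 4 - 3√β` can hold only if `β = 1`, then `2y² + β > 32/19`. -/
theorem stmt0 (β y : ℝ) (hβ : 1 ≤ β) (hy : 0 ≤ y)
    (hineq : y ≥ 4 - 3 * Real.sqrt β)
    (heq : y = 4 - 3 * Real.sqrt β → β = 1) :
    2 * y ^ 2 + β > 32 / 19 :=
  stmt0_general β y hβ hineq heq
end

section
/- Let β and w be real numbers with β ≥ 1 and w ≥ 0. Suppose that w ≥ 4 − 3·√β, and that equality w = 4 − 3·√β can hold only if β = 1. Then w² + 2·β > 32/11. -/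
/-- Algebraic core of the estimate in Section 5: if `β ≥ 1`, `w ≥ 0`,
`w ≥ 4 - 3√β`, and equality `w = 4 - 3√β` can hold only if `β = 1`,
then `w² + 2β > 32/11`. -/
theorem stmt2 (β w : ℝ) (hβ : 1 ≤ β) (hw : 0 ≤ w)
    (hineq : w ≥ 4 - 3 * Real.sqrt β)
    (heq : w = 4 - 3 * Real.sqrt β → β = 1) :
    w ^ 2 + 2 * β > 32 / 11 := by
  set x := Real.sqrt β with hxdef
  have hx1 : 1 ≤ x := by
    rw [hxdef, show (1:ℝ) = Real.sqrt 1 by simp]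
    exact Real.sqrt_le_sqrt hβ
  have hβx : β = x ^ 2 := by
    rw [hxdef, sq, Real.mul_self_sqrt (by linarith)]
  rcases lt_or_ge w (4 - 3 * x) with h | h
  · linarith
  rcases eq_or_lt_of_le h with h | h
  · have hb1 : β = 1 := heq h.symm
    have : x = 1 := by
      rw [hxdef, hb1]; simp
    rw [hβx, this, ← h, this]; norm_num
  · rcases le_or_gt (4 - 3 * x) 0 with h0 | h0
    · nlinarith
    · have hsq : w ^ 2 > (4 - 3 * x) ^ 2 := by nlinarith
      nlinarith [sq_nonneg (11 * x - 12)]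
end
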